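/- arXiv:2302.10066 — 6 statements merged into one kernel-verified Lean document; each statement's English description precedes it below -/
import Mathlib

section
/- If X ~ N(μ, σ²) with σ > 0, then E[X · tanh(μX/σ²)] = μ. -/
open ProbabilityTheory Real
open MeasureTheory NNReal ENNReal

lemma abs_tanh_le_one (x : ℝ) : |Real.tanh x| ≤ 1 := by
  have hc := Real.cosh_pos x
  rw [Real.tanh_eq_sinh_div_cosh, abs_div, abs_of_pos hc, div_le_one hc, abs_le,
    Real.sinh_eq, Real.cosh_eq]
  have h1 := Real.exp_pos x
  have h2 := Real.exp_pos (-x)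
  constructor <;> linarith

lemma integrable_mul_gauss {b : ℝ} (hb : 0 < b) (m : ℝ) :
    Integrable (fun x => x * Real.exp (-(x - m)^2 / (2*b))) := by
  have hb' : (0:ℝ) < (2*b)⁻¹ := by positivity
  have h1 := (integrable_mul_exp_neg_mul_sq hb').comp_sub_right m
  have h2 := ((integrable_exp_neg_mul_sq hb').comp_sub_right m).const_mul m
  refine (h1.add h2).congr (Filter.Eventually.of_forall fun x => ?_)
  simp only [Pi.add_apply]
  rw [show -(x-m)^2 / (2*b) = -(2*b)⁻¹ * (x-m)^2 by ring]
  ring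

lemma integrable_gauss' {b : ℝ} (hb : 0 < b) (m : ℝ) :
    Integrable (fun x => Real.exp (-(x - m)^2 / (2*b))) := by
  have hb' : (0:ℝ) < (2*b)⁻¹ := by positivity
  refine ((integrable_exp_neg_mul_sq hb').comp_sub_right m).congr
    (Filter.Eventually.of_forall fun x => ?_)
  simp only
  rw [show -(x-m)^2 / (2*b) = -(2*b)⁻¹ * (x-m)^2 by ring]

lemma integral_mul_gauss_eq {b : ℝ} (hb : 0 < b) (m : ℝ) :
    ∫ x, x * Real.exp (-(x - m)^2 / (2*b)) = m * ∫ x, Real.exp (-(x - m)^2 / (2*b)) := by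
  have hodd : ∫ y, y * Real.exp (-y^2/(2*b)) = 0 := by
    have h := MeasureTheory.integral_neg_eq_self
      (fun y => y * Real.exp (-y^2 / (2*b))) volume
    simp only [neg_sq, neg_mul, integral_neg] at h
    linarith
  have h := MeasureTheory.integral_sub_right_eq_self
    (μ := volume) (fun y => (y + m) * Real.exp (-y^2 / (2*b))) m
  calc ∫ x, x * Real.exp (-(x - m)^2 / (2*b))
      = ∫ x, ((x - m) + m) * Real.exp (-(x-m)^2 / (2*b)) := by
        congr 1; funext x; rw [sub_add_cancel]
    _ = ∫ y, (y + m) * Real.exp (-y^2 / (2*b)) := h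
    _ = (∫ y, y * Real.exp (-y^2 / (2*b))) + m * ∫ y, Real.exp (-y^2 / (2*b)) := by
        rw [← integral_const_mul, ← integral_add]
        · congr 1; funext y; ring
        · simpa using integrable_mul_gauss hb 0
        · exact (by simpa using integrable_gauss' hb 0 : Integrable fun y => Real.exp (-y^2/(2*b))).const_mul m
    _ = m * ∫ y, Real.exp (-y^2 / (2*b)) := by rw [hodd, zero_add]
    _ = m * ∫ x, Real.exp (-(x - m)^2 / (2*b)) := by
        congr 1
        exact (MeasureTheory.integral_sub_right_eq_self (μ := volume)
          (fun y => Real.exp (-y^2 / (2*b))) m).symm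

lemma integral_gaussianReal_eq (m : ℝ) {v : ℝ≥0} (hv : v ≠ 0) (g : ℝ → ℝ) :
    ∫ x, g x ∂(gaussianReal m v) = ∫ x, gaussianPDFReal m v x * g x := by
  rw [gaussianReal_of_var_ne_zero _ hv]
  have hrw : gaussianPDF m v = fun x => ((Real.toNNReal (gaussianPDFReal m v x)) : ℝ≥0∞) := rfl
  have hmeas : Measurable fun x => (gaussianPDFReal m v x).toNNReal :=
    measurable_real_toNNReal.comp (measurable_gaussianPDFReal m v)
  rw [hrw, integral_withDensity_eq_integral_smul hmeas]
  congr 1; funext x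
  rw [NNReal.smul_def, Real.coe_toNNReal _ (gaussianPDFReal_nonneg m v x), smul_eq_mul]

lemma integral_id_gauss (m : ℝ) {v : ℝ≥0} (hvpos : 0 < (v:ℝ)) :
    ∫ x, x * gaussianPDFReal m v x = m := by
  have hv : v ≠ 0 := fun h => by simp [h] at hvpos
  simp only [gaussianPDFReal]
  have h1 : ∀ x:ℝ, x * ((√(2*π*(v:ℝ)))⁻¹ * rexp (-(x-m)^2/(2*(v:ℝ))))
      = (√(2*π*(v:ℝ)))⁻¹ * (x * rexp (-(x-m)^2/(2*(v:ℝ)))) := fun x => by ring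
  simp_rw [h1]
  rw [integral_const_mul, integral_mul_gauss_eq hvpos m]
  have h2 : (√(2*π*(v:ℝ)))⁻¹ * ∫ x, rexp (-(x-m)^2/(2*(v:ℝ))) = 1 := by
    rw [← integral_const_mul]
    exact integral_gaussianPDFReal_eq_one m hv
  calc (√(2*π*(v:ℝ)))⁻¹ * (m * ∫ x, rexp (-(x-m)^2/(2*(v:ℝ))))
      = m * ((√(2*π*(v:ℝ)))⁻¹ * ∫ x, rexp (-(x-m)^2/(2*(v:ℝ)))) := by ring
    _ = m := by rw [h2, mul_one]

lemma integrable_id_gaussPDF (m : ℝ) {v : ℝ≥0} (hvpos : 0 < (v:ℝ)) :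
    Integrable (fun x => x * gaussianPDFReal m v x) := by
  refine ((integrable_mul_gauss hvpos m).const_mul ((√(2*π*(v:ℝ)))⁻¹)).congr
    (Filter.Eventually.of_forall fun x => ?_)
  simp only [gaussianPDFReal]; ring

lemma key_pointwise (μ : ℝ) {v : ℝ≥0} (hvpos : 0 < (v:ℝ)) (x : ℝ) :
    gaussianPDFReal μ v x * (x * Real.tanh (μ * x / (v:ℝ))) +
      gaussianPDFReal (-μ) v x * (x * Real.tanh (μ * x / (v:ℝ))) =
    x * gaussianPDFReal μ v x - x * gaussianPDFReal (-μ) v x := by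
  simp only [gaussianPDFReal]
  set C := (√(2*π*(v:ℝ)))⁻¹ with hC
  set t := μ * x / (v:ℝ) with ht
  have h1 : -(x - μ)^2/(2*(v:ℝ)) = -(x^2+μ^2)/(2*(v:ℝ)) + t := by
    rw [ht]; field_simp; ring
  have h2 : -(x - -μ)^2/(2*(v:ℝ)) = -(x^2+μ^2)/(2*(v:ℝ)) + -t := by
    rw [ht]; field_simp; ring
  rw [h1, h2, Real.exp_add, Real.exp_add]
  set E := rexp (-(x^2+μ^2)/(2*(v:ℝ))) with hE
  have htanh : Real.tanh t * (rexp t + rexp (-t)) = rexp t - rexp (-t) := by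
    rw [Real.tanh_eq_sinh_div_cosh, Real.sinh_eq, Real.cosh_eq]
    have hc : (0:ℝ) < rexp t + rexp (-t) := by positivity
    field_simp
  linear_combination C * E * x * htanh

/-- If `X ~ N(μ, σ²)` with `σ > 0`, then `E[X · tanh(μX/σ²)] = μ`. -/
theorem gaussian_tanh_expectation (μ σ : ℝ) (hσ : 0 < σ) :
    ∫ x, x * Real.tanh (μ * x / σ ^ 2)
      ∂(gaussianReal μ ⟨σ ^ 2, sq_nonneg σ⟩) = μ := by
  set v : ℝ≥0 := ⟨σ^2, sq_nonneg σ⟩ with hv_def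
  have hvr : (v:ℝ) = σ^2 := rfl
  have hvpos : 0 < (v:ℝ) := by rw [hvr]; positivity
  have hv : v ≠ 0 := fun h => by simp [h] at hvpos
  set f : ℝ → ℝ := fun x => x * Real.tanh (μ * x / σ^2) with hf_def
  have htanh_cont : Continuous Real.tanh := by
    have : Real.tanh = fun x => Real.sinh x / Real.cosh x :=
      funext fun x => Real.tanh_eq_sinh_div_cosh x
    rw [this]
    exact Real.continuous_sinh.div Real.continuous_cosh fun x => (Real.cosh_pos x).ne'
  have hf_cont : Continuous f := by
    apply continuous_id.mul
    exact htanh_cont.comp (by continuity)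
  have hC : (0:ℝ) < √(2*π*(v:ℝ)) := by
    apply Real.sqrt_pos.mpr; positivity
  have hint : ∀ m : ℝ, Integrable (fun x => gaussianPDFReal m v x * f x) := by
    intro m
    have hg : Integrable (fun x => (√(2*π*(v:ℝ)))⁻¹ * |x * Real.exp (-(x - m)^2 / (2*(v:ℝ)))|) :=
      (integrable_mul_gauss hvpos m).abs.const_mul _
    refine Integrable.mono' hg
      ((measurable_gaussianPDFReal m v).mul hf_cont.measurable).aestronglyMeasurable
      (Filter.Eventually.of_forall fun x => ?_)
    simp only [gaussianPDFReal, Real.norm_eq_abs, hf_def]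
    have habs : |Real.exp (-(x - m)^2 / (2*(v:ℝ)))| = Real.exp (-(x - m)^2 / (2*(v:ℝ))) :=
      abs_of_pos (Real.exp_pos _)
    rw [abs_mul, abs_mul, abs_mul, abs_of_pos (inv_pos.mpr hC), habs, abs_mul, habs]
    have h1 := abs_tanh_le_one (μ * x / σ^2)
    have h2 := abs_nonneg x
    have h3 := (Real.exp_pos (-(x-m)^2/(2*(v:ℝ)))).le
    have h4 : (0:ℝ) ≤ (√(2*π*(v:ℝ)))⁻¹ := (inv_pos.mpr hC).le
    have h5 := abs_nonneg (Real.tanh (μ * x / σ^2))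
    nlinarith [mul_nonneg (mul_nonneg (mul_nonneg h4 h2) h3) (sub_nonneg.mpr h1)]
  have hrep : ∀ m : ℝ, (∫ x, f x ∂(gaussianReal m v)) = ∫ x, gaussianPDFReal m v x * f x :=
    fun m => integral_gaussianReal_eq m hv f
  have hmap : (gaussianReal μ v).map (fun x => -x) = gaussianReal (-μ) v := by
    have h := gaussianReal_map_const_mul (μ := μ) (v := v) (-1)
    have h2 : (NNReal.mk ((-1:ℝ)^2) (sq_nonneg _) : ℝ≥0) = 1 := by ext; norm_num
    rw [h2, one_mul] at h
    simpa [neg_one_mul] using h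
  have hsym : (∫ x, f x ∂(gaussianReal μ v)) = ∫ x, f x ∂(gaussianReal (-μ) v) := by
    rw [← hmap, integral_map measurable_neg.aemeasurable hf_cont.aestronglyMeasurable]
    congr 1; funext x
    simp only [hf_def]
    rw [show μ * -x / σ^2 = -(μ * x / σ^2) by ring, Real.tanh_neg]; ring
  have key : (∫ x, f x ∂(gaussianReal μ v)) + (∫ x, f x ∂(gaussianReal μ v)) = μ - (-μ) := by
    nth_rewrite 2 [hsym]
    rw [hrep μ, hrep (-μ), ← integral_add (hint μ) (hint (-μ))]
    have hpt : (fun x => gaussianPDFReal μ v x * f x + gaussianPDFReal (-μ) v x * f x)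
        =ᵐ[MeasureTheory.volume]
        (fun x => x * gaussianPDFReal μ v x - x * gaussianPDFReal (-μ) v x) :=
      Filter.Eventually.of_forall fun x => key_pointwise μ hvpos x
    rw [integral_congr_ae hpt]
    rw [integral_sub (integrable_id_gaussPDF μ hvpos) (integrable_id_gaussPDF (-μ) hvpos),
      integral_id_gauss μ hvpos, integral_id_gauss (-μ) hvpos]
  linarith
end

section
/- For Z ~ N(ν, 1), E[Z·(tanh(νZ) − 1)] = 0. -/
open ProbabilityTheory Real MeasureTheory
open scoped NNReal ENNReal

lemma gauss_tanh_key (ν z : ℝ) :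
    Real.exp (-(-z - ν)^2 / 2) * (Real.tanh (ν * z) + 1)
      = Real.exp (-(z - ν)^2 / 2) * (1 - Real.tanh (ν * z)) := by
  have hc := Real.cosh_pos (ν * z)
  have h1 : Real.tanh (ν * z) + 1 = Real.exp (ν * z) / Real.cosh (ν * z) := by
    rw [Real.tanh_eq_sinh_div_cosh, ← Real.sinh_add_cosh]
    field_simp
  have h2 : 1 - Real.tanh (ν * z) = Real.exp (-(ν * z)) / Real.cosh (ν * z) := by
    rw [Real.tanh_eq_sinh_div_cosh, ← Real.cosh_sub_sinh]
    field_simp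
  have hE : Real.exp (-(-z - ν)^2 / 2) * Real.exp (ν * z)
      = Real.exp (-(z - ν)^2 / 2) * Real.exp (-(ν * z)) := by
    rw [← Real.exp_add, ← Real.exp_add]; congr 1; ring
  rw [h1, h2]
  field_simp
  ring_nf at hE ⊢
  linear_combination hE

/-- For `Z ~ N(ν, 1)`, `E[Z·(tanh(νZ) − 1)] = 0`. -/
theorem gaussian_tanh_sub_one_expectation (ν : ℝ) :
    ∫ z, z * (Real.tanh (ν * z) - 1) ∂(gaussianReal ν 1) = 0 := by
  rw [gaussianReal_of_var_ne_zero ν one_ne_zero]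
  have hmeas : Measurable fun x => (gaussianPDFReal ν 1 x).toNNReal :=
    (measurable_gaussianPDFReal ν 1).real_toNNReal
  have hpdf : gaussianPDF ν 1 = fun x => ((gaussianPDFReal ν 1 x).toNNReal : ℝ≥0∞) := by
    funext x; rfl
  rw [hpdf, integral_withDensity_eq_integral_smul hmeas]
  have hrw : ∀ x : ℝ, ((gaussianPDFReal ν 1 x).toNNReal : ℝ) = gaussianPDFReal ν 1 x :=
    fun x => Real.coe_toNNReal _ (gaussianPDFReal_nonneg ν 1 x)
  set F : ℝ → ℝ := fun z => gaussianPDFReal ν 1 z * (z * (Real.tanh (ν * z) - 1)) with hF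
  have heq : (∫ z, (gaussianPDFReal ν 1 z).toNNReal • (z * (Real.tanh (ν * z) - 1)))
      = ∫ z, F z := by
    congr 1; funext z
    simp [F, NNReal.smul_def, hrw z]
  rw [heq]
  have hodd : ∀ z, F (-z) = -F z := by
    intro z
    have hkey := gauss_tanh_key ν z
    simp only [F, gaussianPDFReal]
    push_cast
    rw [show ν * -z = -(ν * z) by ring, Real.tanh_neg]
    have h2π : Real.sqrt (2 * π * 1) ≠ 0 := by
      positivity
    field_simp
    ring_nf at hkey ⊢
    linear_combination z * hkey
  have hneg : (∫ z, F z) = ∫ z, F (-z) := (integral_neg_eq_self F volume).symm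
  have h2 : (∫ z, F (-z)) = -∫ z, F z := by
    simp_rw [hodd]
    exact integral_neg F
  linarith [hneg, h2]
end

section
/- For Z ~ N(ν, 1), E[Z² · tanh(νZ) · (tanh(νZ) − 1)] = 0. -/
open ProbabilityTheory Real MeasureTheory NNReal ENNReal

lemma tanh_key (a : ℝ) :
    (1 + Real.tanh a) * Real.exp (-(2 * a)) = 1 - Real.tanh a := by
  rw [Real.tanh_eq_sinh_div_cosh, Real.sinh_eq, Real.cosh_eq]
  have h : Real.exp a + Real.exp (-a) ≠ 0 := by positivity
  field_simp
  have h2 : Real.exp (-(2 * a)) = Real.exp (-a) * Real.exp (-a) := by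
    rw [← Real.exp_add]; ring_nf
  have h3 : Real.exp a * Real.exp (-a) = 1 := by
    rw [← Real.exp_add]; simp
  rw [show rexp a + rexp (-a) + (rexp a - rexp (-a)) = rexp a + rexp a by ring,
    show rexp a + rexp (-a) - (rexp a - rexp (-a)) = rexp (-a) + rexp (-a) by ring,
    show a * 2 = 2 * a by ring]
  calc (rexp a + rexp a) * rexp (-(2*a))
      = 2 * (rexp a * rexp (-a)) * rexp (-a) := by rw [h2]; ring
    _ = rexp (-a) + rexp (-a) := by rw [h3]; ring

/-- For `Z ~ N(ν, 1)`, `E[Z² · tanh(νZ) · (tanh(νZ) − 1)] = 0`. -/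
theorem gaussian_sq_tanh_expectation (ν : ℝ) :
    ∫ z, z ^ 2 * Real.tanh (ν * z) * (Real.tanh (ν * z) - 1)
      ∂(gaussianReal ν 1) = 0 := by
  rw [gaussianReal_of_var_ne_zero ν one_ne_zero]
  have hd : gaussianPDF ν 1 =
      fun x => ((Real.toNNReal (gaussianPDFReal ν 1 x) : ℝ≥0) : ℝ≥0∞) := rfl
  rw [hd, integral_withDensity_eq_integral_smul
    ((measurable_gaussianPDFReal ν 1).real_toNNReal) _]
  simp only [NNReal.smul_def, smul_eq_mul]
  set F : ℝ → ℝ := fun x =>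
    (Real.toNNReal (gaussianPDFReal ν 1 x) : ℝ) *
      (x ^ 2 * Real.tanh (ν * x) * (Real.tanh (ν * x) - 1)) with hF
  have hFodd : ∀ x, F (-x) = -F x := by
    intro x
    have hc : ((Real.toNNReal (gaussianPDFReal ν 1 x) : ℝ)) = gaussianPDFReal ν 1 x :=
      Real.coe_toNNReal _ (gaussianPDFReal_nonneg ν 1 x)
    have hc' : ((Real.toNNReal (gaussianPDFReal ν 1 (-x)) : ℝ)) = gaussianPDFReal ν 1 (-x) :=
      Real.coe_toNNReal _ (gaussianPDFReal_nonneg ν 1 (-x))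
    simp only [hF, hc, hc']
    have hpdf : gaussianPDFReal ν 1 (-x)
        = gaussianPDFReal ν 1 x * Real.exp (-(2 * (ν * x))) := by
      have he : rexp (-(x - ν) ^ 2 / (2 * ((1 : ℝ≥0) : ℝ))) * rexp (-(2 * (ν * x)))
          = rexp (-(-x - ν) ^ 2 / (2 * ((1 : ℝ≥0) : ℝ))) := by
        rw [← Real.exp_add]
        apply congrArg
        push_cast
        ring
      simp only [gaussianPDFReal, mul_assoc, he]
    rw [hpdf]
    rw [show ν * -x = -(ν * x) by ring, Real.tanh_neg]
    have hk := tanh_key (ν * x)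
    linear_combination (gaussianPDFReal ν 1 x * x ^ 2 * Real.tanh (ν * x)) * hk
  have h1 : ∫ x, F x = ∫ x, F (-x) := (integral_neg_eq_self F volume).symm
  have h2 : ∫ x, F (-x) = -∫ x, F x := by
    simp_rw [hFodd]; exact integral_neg F
  have := h1.trans h2
  linarith
end

section
/- For all real t ≥ 0, t³·tanh''(t) lies in [−2, 0], and in particular |t³·tanh''(t)| ≤ 2 for t ≥ 0. -/
open Real

lemma tanh_hasDerivAt (x : ℝ) : HasDerivAt Real.tanh (1 / Real.cosh x ^ 2) x := by
  have h := (Real.hasDerivAt_sinh x).div (Real.hasDerivAt_cosh x) (Real.cosh_pos x).ne'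
  have heq : (fun y => Real.sinh y / Real.cosh y) = Real.tanh := by
    funext y; rw [Real.tanh_eq_sinh_div_cosh]
  rw [show (Real.sinh / Real.cosh) = Real.tanh from heq] at h
  refine h.congr_deriv ?_
  have h2 := Real.cosh_sq_sub_sinh_sq x
  rw [div_left_inj' (by positivity)]
  nlinarith [h2]

lemma deriv_tanh_eq : deriv Real.tanh = fun x => 1 / Real.cosh x ^ 2 := by
  funext x; exact (tanh_hasDerivAt x).deriv

lemma second_deriv_tanh (t : ℝ) :
    deriv (deriv Real.tanh) t = -(2 * Real.sinh t) / Real.cosh t ^ 3 := by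
  rw [deriv_tanh_eq]
  have hc := Real.cosh_pos t
  have hpow : HasDerivAt (fun x => Real.cosh x ^ 2)
      ((2 : ℕ) * Real.cosh t ^ 1 * Real.sinh t) t := (Real.hasDerivAt_cosh t).pow 2
  have h := (hasDerivAt_const t (1 : ℝ)).div hpow (by positivity)
  rw [show deriv (fun x => 1 / Real.cosh x ^ 2) t = _ from h.deriv]
  field_simp
  ring

/-- For all real `t ≥ 0`, `t³·tanh''(t) ∈ [−2, 0]`; in particular
`|t³·tanh''(t)| ≤ 2` for `t ≥ 0`. -/
theorem cube_mul_second_deriv_tanh_bound (t : ℝ) (ht : 0 ≤ t) :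
    t ^ 3 * deriv (deriv Real.tanh) t ∈ Set.Icc (-2 : ℝ) 0 ∧
      |t ^ 3 * deriv (deriv Real.tanh) t| ≤ 2 := by
  rw [second_deriv_tanh]
  have hc := Real.cosh_pos t
  have hs : 0 ≤ Real.sinh t := by
    rw [Real.sinh_eq]
    have h1 : 1 ≤ Real.exp t := Real.one_le_exp ht
    have h2 : Real.exp (-t) ≤ 1 := Real.exp_le_one_iff.mpr (by linarith)
    linarith
  have hsc : Real.sinh t ≤ Real.cosh t := by
    rw [Real.sinh_eq, Real.cosh_eq]
    have := Real.exp_pos (-t); linarith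
  -- key inequality : t^3 ≤ cosh t ^ 2
  have hkey : t ^ 3 ≤ Real.cosh t ^ 2 := by
    have he : 1 + t + t ^ 2 / 2 + t ^ 3 / 6 + t ^ 4 / 24 ≤ Real.exp t := by
      have := Real.sum_le_exp_of_nonneg ht 5
      simp only [Finset.sum_range_succ, Finset.sum_range_zero, Nat.factorial] at this
      norm_num at this
      linarith
    have hep : (0:ℝ) < Real.exp t := Real.exp_pos t
    have hcosh : Real.exp t / 2 ≤ Real.cosh t := by
      rw [Real.cosh_eq]
      have : (0:ℝ) < Real.exp (-t) := Real.exp_pos _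
      linarith
    have h4 : 4 * t ^ 3 ≤ Real.exp t ^ 2 := by
      nlinarith [sq_nonneg (t - 1), sq_nonneg (t^2 - 2*t), sq_nonneg t, pow_nonneg ht 3, pow_nonneg ht 4, sq_nonneg (1 + t + t^2/2 + t^3/6 + t^4/24)]
    nlinarith [sq_nonneg (Real.exp t / 2 - Real.cosh t)]
  have hnum : t ^ 3 * Real.sinh t ≤ Real.cosh t ^ 3 := by
    calc t ^ 3 * Real.sinh t ≤ Real.cosh t ^ 2 * Real.cosh t := by
          apply mul_le_mul hkey hsc hs (by positivity)
      _ = Real.cosh t ^ 3 := by ring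
  have hc3 : (0:ℝ) < Real.cosh t ^ 3 := by positivity
  have hval : t ^ 3 * (-(2 * Real.sinh t) / Real.cosh t ^ 3)
      = -(2 * (t ^ 3 * Real.sinh t) / Real.cosh t ^ 3) := by ring
  constructor
  · rw [hval]
    constructor
    · rw [neg_le_neg_iff.symm, neg_neg]
      rw [div_le_iff₀ hc3]
      nlinarith [hnum]
    · have : 0 ≤ 2 * (t ^ 3 * Real.sinh t) / Real.cosh t ^ 3 := by positivity
      linarith
  · rw [hval, abs_neg, abs_of_nonneg (by positivity), div_le_iff₀ hc3]
    nlinarith [hnum]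
end

section
/- Let x be uniform on {e_i − e_j : 1 ≤ i < j ≤ d} and fix u ∈ ℝ^d with Σ_j u_j = 0. Define X := ((d−1)/2) · Σ_{i∈I} Σ_{j≠i} (u_i − u_j)·1{x = ±(e_i − e_j)} for a subset I ⊆ [d]. Then E[X] = Σ_{i∈I} u_i, |X| ≤ 2d·‖u‖_∞, and E[X²] ≤ 2d·|I|·‖u‖_∞². -/
open Finset

set_option linter.unreachableTactic false
set_option linter.unusedTactic false

section aux

lemma single_sub_eq_iff {d : ℕ} {a b i j : Fin d} (hij : i ≠ j) :
    ((Pi.single a 1 : Fin d → ℝ) - Pi.single b 1 = Pi.single i 1 - Pi.single j 1) ↔ (a = i ∧ b = j) := by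
  constructor
  · intro h
    have hi := congrFun h i
    have hj := congrFun h j
    simp [Pi.single_apply, hij, hij.symm] at hi hj
    split_ifs at hi hj
    all_goals try simp_all
    all_goals norm_num at hi
  · rintro ⟨rfl, rfl⟩; rfl

lemma sum_pairs_eq {d : ℕ} (g : Fin d × Fin d → ℝ) (hsym : ∀ p : Fin d × Fin d, g p.swap = g p) :
    ∑ p ∈ univ.filter (fun p : Fin d × Fin d => p.1 < p.2), g p
      = ((∑ p : Fin d × Fin d, g p) - ∑ i, g (i, i)) / 2 := by
  have hswap : ∑ p ∈ univ.filter (fun p : Fin d × Fin d => p.2 < p.1), g p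
      = ∑ p ∈ univ.filter (fun p : Fin d × Fin d => p.1 < p.2), g p := by
    refine Finset.sum_equiv (Equiv.prodComm _ _) (fun p => ?_) (fun p hp => (hsym p).symm)
    simp
  have h1 := Finset.sum_filter_add_sum_filter_not (univ : Finset (Fin d × Fin d))
      (fun p => p.1 < p.2) g
  have h2 := Finset.sum_filter_add_sum_filter_not
      ((univ : Finset (Fin d × Fin d)).filter (fun p => ¬ p.1 < p.2)) (fun p => p.2 < p.1) g
  rw [Finset.filter_filter, Finset.filter_filter] at h2
  have e1 : (univ : Finset (Fin d × Fin d)).filter (fun p => ¬ p.1 < p.2 ∧ p.2 < p.1)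
      = univ.filter (fun p => p.2 < p.1) := by
    apply Finset.filter_congr; intro p _
    simp only [iff_self_and, and_iff_right_iff_imp]
    intro h; exact not_lt.2 h.le
  have e2 : (univ : Finset (Fin d × Fin d)).filter (fun p => ¬ p.1 < p.2 ∧ ¬ p.2 < p.1)
      = univ.filter (fun p => p.1 = p.2) := by
    apply Finset.filter_congr; intro p _
    constructor
    · rintro ⟨h1', h2'⟩; exact le_antisymm (not_lt.1 h2') (not_lt.1 h1')
    · rintro h; simp [h]
  have hdiag : ∑ p ∈ (univ : Finset (Fin d × Fin d)).filter (fun p => p.1 = p.2), g p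
      = ∑ i, g (i, i) := by
    rw [Finset.sum_filter, Fintype.sum_prod_type]
    simp
  rw [e1, e2, hswap, hdiag] at h2
  linarith

lemma key_eval {d : ℕ} (u : Fin d → ℝ) (I : Finset (Fin d)) (a b : Fin d) (hab : a ≠ b) :
    ∑ i ∈ I, ∑ j ∈ Finset.univ.filter (· ≠ i),
        (u i - u j) * (if (Pi.single a 1 : Fin d → ℝ) - Pi.single b 1
              = Pi.single i 1 - Pi.single j 1 ∨
            (Pi.single a 1 : Fin d → ℝ) - Pi.single b 1
              = Pi.single j 1 - Pi.single i 1 then 1 else 0)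
      = (u a - u b) * ((if a ∈ I then (1:ℝ) else 0) - (if b ∈ I then (1:ℝ) else 0)) := by
  have hin : ∀ i : Fin d, ∑ j ∈ Finset.univ.filter (· ≠ i),
      (u i - u j) * (if (Pi.single a 1 : Fin d → ℝ) - Pi.single b 1
              = Pi.single i 1 - Pi.single j 1 ∨
            (Pi.single a 1 : Fin d → ℝ) - Pi.single b 1
              = Pi.single j 1 - Pi.single i 1 then 1 else 0)
      = (if i = a then (u a - u b) else 0) + (if i = b then (u b - u a) else 0) := by
    intro i
    have hcond : ∀ j ∈ Finset.univ.filter (· ≠ i),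
        (u i - u j) * (if (Pi.single a 1 : Fin d → ℝ) - Pi.single b 1
              = Pi.single i 1 - Pi.single j 1 ∨
            (Pi.single a 1 : Fin d → ℝ) - Pi.single b 1
              = Pi.single j 1 - Pi.single i 1 then 1 else 0)
        = (u i - u j) * (if (a = i ∧ b = j) ∨ (a = j ∧ b = i) then 1 else 0) := by
      intro j hj
      have hji : j ≠ i := by simpa using hj
      simp only [single_sub_eq_iff hji.symm, single_sub_eq_iff hji]
    rw [Finset.sum_congr rfl hcond]
    by_cases hia : i = a
    · have hib : i ≠ b := fun h => hab (hia.symm.trans h)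
      rw [if_pos hia, if_neg hib]
      rw [Finset.sum_eq_single_of_mem b (by simp [hia, hab.symm])]
      · simp [hia, hab, hab.symm]
      · intro j hj hjb
        rw [if_neg, mul_zero]
        rintro (⟨h1, h2⟩ | ⟨h1, h2⟩)
        · exact hjb h2.symm
        · exact hib h2.symm
    · by_cases hib : i = b
      · rw [if_neg hia, if_pos hib]
        rw [Finset.sum_eq_single_of_mem a (by simp [hib, hab])]
        · simp [hib, hab, hab.symm]
        · intro j hj hja
          rw [if_neg, mul_zero]
          rintro (⟨h1, h2⟩ | ⟨h1, h2⟩)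
          · exact hia h1.symm
          · exact hja h1.symm
      · rw [if_neg hia, if_neg hib]
        rw [Finset.sum_eq_zero]
        · norm_num
        intro j hj
        rw [if_neg, mul_zero]
        rintro (⟨h1, h2⟩ | ⟨h1, h2⟩)
        · exact hia h1.symm
        · exact hib h2.symm
  rw [Finset.sum_congr rfl (fun i _ => hin i), Finset.sum_add_distrib]
  rw [Finset.sum_ite_eq' I a, Finset.sum_ite_eq' I b]
  by_cases ha : a ∈ I <;> by_cases hb : b ∈ I <;> simp [ha, hb] <;> ring

end aux

set_option maxHeartbeats 1000000 in
/-- For `x` uniform on `{e_i − e_j : i < j}` and `u` with `∑_j u_j = 0`, the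
random variable `X = ((d−1)/2) ∑_{i∈I} ∑_{j≠i} (u_i − u_j)·1{x = ±(e_i − e_j)}`
satisfies `E[X] = ∑_{i∈I} u_i`, `|X| ≤ 2d‖u‖_∞` and `E[X²] ≤ 2d|I|·‖u‖_∞²`. -/
theorem bernstein_moment_bounds (d : ℕ) (hd : 2 ≤ d)
    (u : Fin d → ℝ) (hu : ∑ j, u j = 0)
    (I : Finset (Fin d)) (hI : I.Nonempty)
    (X : (Fin d → ℝ) → ℝ)
    (hX : X = fun x => ((d - 1 : ℝ) / 2) * ∑ i ∈ I,
        ∑ j ∈ Finset.univ.filter (· ≠ i),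
          (u i - u j) * (if x = Pi.single i 1 - Pi.single j 1 ∨
                            x = Pi.single j 1 - Pi.single i 1 then 1 else 0))
    (pairs : Finset (Fin d × Fin d))
    (hpairs : pairs = Finset.univ.filter (fun p : Fin d × Fin d => p.1 < p.2)) :
    ((d.choose 2 : ℝ))⁻¹ *
        (∑ p ∈ pairs, X (Pi.single p.1 1 - Pi.single p.2 1)) = ∑ i ∈ I, u i ∧
      (∀ p ∈ pairs, |X (Pi.single p.1 1 - Pi.single p.2 1)| ≤ 2 * d * ‖u‖) ∧
      ((d.choose 2 : ℝ))⁻¹ *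
        (∑ p ∈ pairs, X (Pi.single p.1 1 - Pi.single p.2 1) ^ 2) ≤
          2 * d * I.card * ‖u‖ ^ 2 := by
  subst hpairs
  set χ : Fin d → ℝ := fun i => if i ∈ I then 1 else 0 with hχ
  have hdR : (2:ℝ) ≤ (d:ℝ) := by exact_mod_cast hd
  -- binomial coefficient
  have heven : 2 ∣ d * (d - 1) := by
    rcases Nat.even_or_odd d with h | h
    · exact dvd_mul_of_dvd_left h.two_dvd _
    · exact dvd_mul_of_dvd_right (Nat.Odd.sub_odd h odd_one).two_dvd _
  have h2' : d.choose 2 * 2 = d * (d - 1) := by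
    rw [Nat.choose_two_right]; exact Nat.div_mul_cancel heven
  have hC : ((d.choose 2 : ℕ) : ℝ) = (d:ℝ) * ((d:ℝ) - 1) / 2 := by
    have h := congrArg (fun n : ℕ => (n:ℝ)) h2'
    push_cast [Nat.cast_sub (by omega : 1 ≤ d)] at h
    linarith
  have hCpos : (0:ℝ) < ((d.choose 2 : ℕ) : ℝ) := by
    exact_mod_cast Nat.choose_pos hd
  -- key formula
  have key : ∀ a b : Fin d, a ≠ b →
      X (Pi.single a 1 - Pi.single b 1) = ((d:ℝ) - 1) / 2 * ((u a - u b) * (χ a - χ b)) := by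
    intro a b hab
    rw [hX]
    simp only
    rw [key_eval u I a b hab]
  -- norm facts
  have hM : ∀ i, |u i| ≤ ‖u‖ := by
    intro i; simpa [Real.norm_eq_abs] using norm_le_pi_norm u i
  have hM0 : (0:ℝ) ≤ ‖u‖ := norm_nonneg u
  -- χ facts
  have hT : ∑ i, χ i = (I.card : ℝ) := by
    simp [hχ, Finset.sum_ite_mem]
  have hS : ∑ i, u i * χ i = ∑ i ∈ I, u i := by
    simp [hχ, mul_ite, mul_one, mul_zero, Finset.sum_ite_mem]
  have hT0 : (0:ℝ) ≤ (I.card : ℝ) := by positivity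
  -- mean computation
  have hexpand : ∑ p : Fin d × Fin d, (u p.1 - u p.2) * (χ p.1 - χ p.2)
      = 2 * (d:ℝ) * ∑ i ∈ I, u i := by
    rw [Fintype.sum_prod_type]
    have step : ∀ a : Fin d, ∑ b, (u a - u b) * (χ a - χ b)
        = (d:ℝ) * (u a * χ a) - u a * (I.card : ℝ) + ∑ i ∈ I, u i := by
      intro a
      have : ∀ b, (u a - u b) * (χ a - χ b)
          = u a * χ a - u a * χ b - χ a * u b + u b * χ b := fun b => by ring
      simp only [this, Finset.sum_sub_distrib, Finset.sum_add_distrib, Finset.sum_const,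
        Finset.card_univ, Fintype.card_fin, nsmul_eq_mul, ← Finset.mul_sum, hT, hS, hu]
      ring
    simp only [step, Finset.sum_sub_distrib, Finset.sum_add_distrib, Finset.sum_const,
      Finset.card_univ, Fintype.card_fin, nsmul_eq_mul, ← Finset.mul_sum, ← Finset.sum_mul,
      hS, hu]
    ring
  have hg1 : ∑ p ∈ univ.filter (fun p : Fin d × Fin d => p.1 < p.2),
      (u p.1 - u p.2) * (χ p.1 - χ p.2) = (d:ℝ) * ∑ i ∈ I, u i := by
    rw [sum_pairs_eq (fun p => (u p.1 - u p.2) * (χ p.1 - χ p.2)) (fun p => by simp; ring)]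
    simp only [hexpand, sub_self, mul_zero, zero_mul]
    simp
    ring
  have hsum1 : ∑ p ∈ univ.filter (fun p : Fin d × Fin d => p.1 < p.2),
      X (Pi.single p.1 1 - Pi.single p.2 1)
      = ((d:ℝ) - 1) / 2 * ((d:ℝ) * ∑ i ∈ I, u i) := by
    rw [Finset.sum_congr rfl (fun p hp => key p.1 p.2 (ne_of_lt (by simpa using hp)))]
    rw [← Finset.mul_sum, hg1]
  have hne : (d:ℝ) * ((d:ℝ) - 1) / 2 ≠ 0 := by nlinarith
  refine ⟨?_, ?_, ?_⟩
  · rw [hsum1, hC,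
      show ((d:ℝ) - 1) / 2 * ((d:ℝ) * ∑ i ∈ I, u i)
          = ((d:ℝ) * ((d:ℝ) - 1) / 2) * ∑ i ∈ I, u i from by ring,
      inv_mul_cancel_left₀ hne]
  · intro p hp
    have hab : p.1 ≠ p.2 := ne_of_lt (by simpa using hp)
    rw [key p.1 p.2 hab]
    have h1 : |u p.1 - u p.2| ≤ 2 * ‖u‖ := by
      have := abs_sub_abs_le_abs_sub (u p.1) (u p.2)
      have h2 := abs_sub (u p.1) (u p.2)
      nlinarith [hM p.1, hM p.2, abs_sub_le (u p.1) 0 (u p.2), abs_nonneg (u p.1 - u p.2)]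
    have h2 : |χ p.1 - χ p.2| ≤ 1 := by
      simp only [hχ]; split_ifs <;> norm_num
    rw [abs_mul, abs_mul, abs_of_nonneg (by linarith : (0:ℝ) ≤ ((d:ℝ) - 1) / 2)]
    have habs1 : (0:ℝ) ≤ |u p.1 - u p.2| := abs_nonneg _
    have habs2 : (0:ℝ) ≤ |χ p.1 - χ p.2| := abs_nonneg _
    have hAB : |u p.1 - u p.2| * |χ p.1 - χ p.2| ≤ 2 * ‖u‖ := by
      have := mul_le_mul h1 h2 habs2 (by linarith : (0:ℝ) ≤ 2 * ‖u‖)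
      linarith
    nlinarith [mul_le_mul_of_nonneg_left hAB (by linarith : (0:ℝ) ≤ ((d:ℝ) - 1) / 2), hM0, hdR]
  · -- second moment
    have hptbound : ∀ p ∈ univ.filter (fun p : Fin d × Fin d => p.1 < p.2),
        X (Pi.single p.1 1 - Pi.single p.2 1) ^ 2
          ≤ (((d:ℝ) - 1) / 2) ^ 2 * (4 * ‖u‖ ^ 2) * (χ p.1 + χ p.2) := by
      intro p hp
      have hab : p.1 ≠ p.2 := ne_of_lt (by simpa using hp)
      rw [key p.1 p.2 hab]
      have hu2 : (u p.1 - u p.2) ^ 2 ≤ 4 * ‖u‖ ^ 2 := by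
        have ha := abs_le.1 (hM p.1)
        have hb := abs_le.1 (hM p.2)
        nlinarith [ha.1, ha.2, hb.1, hb.2]
      have hχ2 : (χ p.1 - χ p.2) ^ 2 ≤ χ p.1 + χ p.2 := by
        simp only [hχ]; split_ifs <;> norm_num
      have hprod : (u p.1 - u p.2) ^ 2 * (χ p.1 - χ p.2) ^ 2
          ≤ 4 * ‖u‖ ^ 2 * (χ p.1 + χ p.2) :=
        mul_le_mul hu2 hχ2 (sq_nonneg _) (by positivity)
      have hc2 : (0:ℝ) ≤ (((d:ℝ) - 1) / 2) ^ 2 := sq_nonneg _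
      calc (((d:ℝ) - 1) / 2 * ((u p.1 - u p.2) * (χ p.1 - χ p.2))) ^ 2
          = (((d:ℝ) - 1) / 2) ^ 2 * ((u p.1 - u p.2) ^ 2 * (χ p.1 - χ p.2) ^ 2) := by ring
        _ ≤ (((d:ℝ) - 1) / 2) ^ 2 * (4 * ‖u‖ ^ 2 * (χ p.1 + χ p.2)) :=
            mul_le_mul_of_nonneg_left hprod hc2
        _ = (((d:ℝ) - 1) / 2) ^ 2 * (4 * ‖u‖ ^ 2) * (χ p.1 + χ p.2) := by ring
    have hg2 : ∑ p ∈ univ.filter (fun p : Fin d × Fin d => p.1 < p.2), (χ p.1 + χ p.2)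
        = ((d:ℝ) - 1) * (I.card : ℝ) := by
      rw [sum_pairs_eq (fun p => χ p.1 + χ p.2) (fun p => by simp; ring)]
      rw [Fintype.sum_prod_type]
      simp only [Finset.sum_add_distrib, Finset.sum_const, Finset.card_univ, Fintype.card_fin,
        nsmul_eq_mul, hT, ← Finset.mul_sum, ← Finset.sum_mul]
      ring
    have hsum2 : ∑ p ∈ univ.filter (fun p : Fin d × Fin d => p.1 < p.2),
        X (Pi.single p.1 1 - Pi.single p.2 1) ^ 2
        ≤ (((d:ℝ) - 1) / 2) ^ 2 * (4 * ‖u‖ ^ 2) * (((d:ℝ) - 1) * (I.card : ℝ)) := by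
      have h := Finset.sum_le_sum hptbound
      rwa [← Finset.mul_sum, hg2] at h
    refine le_trans (mul_le_mul_of_nonneg_left hsum2 (le_of_lt (inv_pos.2 hCpos))) ?_
    have hM2 : (0:ℝ) ≤ ‖u‖ ^ 2 := sq_nonneg _
    have hfac : ((d:ℝ) - 1) ^ 3 ≤ (d:ℝ) ^ 2 * ((d:ℝ) - 1) := by nlinarith
    rw [hC, inv_mul_le_iff₀ (by nlinarith : (0:ℝ) < (d:ℝ) * ((d:ℝ) - 1) / 2)]
    nlinarith [mul_le_mul_of_nonneg_right hfac (mul_nonneg hT0 hM2)]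
end

section
/- Non-identifiability of 3-component pairwise-difference mixtures: there exist two distinct (as unordered triples) families θ^{[1]}, θ^{[2]}, θ^{[3]} and θ̃^{[1]}, θ̃^{[2]}, θ̃^{[3]} in ℝ^d (d ≥ 2) such that for every pair i < j, the multiset {θ^{[ℓ]}_i − θ^{[ℓ]}_j : ℓ = 1,2,3} equals the multiset {θ̃^{[ℓ]}_i − θ̃^{[ℓ]}_j : ℓ = 1,2,3}. A witness: vectors with first two coordinates (1,2), (3,3), (2,4) versus (2,2), (1,3), (3,4) and all other coordinates equal. -/
private lemma rot3 (a b c : ℝ) : ({a, b, c} : Multiset ℝ) = {b, c, a} := by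
  simp only [Multiset.insert_eq_cons]
  rw [Multiset.cons_swap a b, ← Multiset.cons_zero c, Multiset.cons_swap a c, Multiset.cons_zero]

private def th (d : ℕ) : Fin 3 → Fin d → ℝ :=
  fun k i => if (i : ℕ) = 0 then ![1, 3, 2] k else if (i : ℕ) = 1 then ![2, 3, 4] k else 0

private def th' (d : ℕ) : Fin 3 → Fin d → ℝ :=
  fun k i => if (i : ℕ) = 0 then ![2, 1, 3] k else if (i : ℕ) = 1 then ![2, 3, 4] k else 0

/-- Non-identifiability of 3-component pairwise-difference mixtures: for `d ≥ 2`
there exist two triples of vectors in `ℝ^d`, distinct as unordered triples,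
whose multisets of pairwise coordinate differences coincide for every pair of
coordinates. -/
theorem three_component_mixture_not_identifiable (d : ℕ) (hd : 2 ≤ d) :
    ∃ θ θ' : Fin 3 → Fin d → ℝ,
      ({θ 0, θ 1, θ 2} : Multiset (Fin d → ℝ)) ≠ ({θ' 0, θ' 1, θ' 2} : Multiset (Fin d → ℝ)) ∧
      ∀ i j : Fin d, i < j →
        ({θ 0 i - θ 0 j, θ 1 i - θ 1 j, θ 2 i - θ 2 j} : Multiset ℝ) =
          ({θ' 0 i - θ' 0 j, θ' 1 i - θ' 1 j, θ' 2 i - θ' 2 j} : Multiset ℝ) := by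
  refine ⟨th d, th' d, ?_, ?_⟩
  · intro h
    have hmem : th' d 0 ∈ ({th d 0, th d 1, th d 2} : Multiset (Fin d → ℝ)) := by
      rw [h]; simp
    set i0 : Fin d := ⟨0, by omega⟩ with hi0
    set i1 : Fin d := ⟨1, by omega⟩ with hi1
    simp only [Multiset.insert_eq_cons, Multiset.mem_cons, Multiset.mem_singleton] at hmem
    rcases hmem with h' | h' | h'
    · have := congrFun h' i0
      simp [th, th', hi0] at this
    · have := congrFun h' i0
      simp [th, th', hi0] at this
    · have := congrFun h' i1
      simp [th, th', hi1] at this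
  · intro i j hij
    have hij' : (i : ℕ) < (j : ℕ) := hij
    by_cases hi0 : (i : ℕ) = 0
    · by_cases hj1 : (j : ℕ) = 1
      · simp only [th, th', hi0, hj1]
        norm_num [Matrix.cons_val_two]
        calc ({(-1 : ℝ), 0, -2} : Multiset ℝ) = {0, -2, -1} := rot3 _ _ _
          _ = _ := by norm_num
      · have hj0 : (j : ℕ) ≠ 0 := by omega
        simp only [th, th', hi0, hj0, hj1, if_true, if_false]
        norm_num
        calc ({(1 : ℝ), 3, 2} : Multiset ℝ) = {3, 2, 1} := rot3 _ _ _
          _ = {2, 1, 3} := rot3 _ _ _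
    · have hj0 : (j : ℕ) ≠ 0 := by omega
      by_cases hi1 : (i : ℕ) = 1
      · have hj1 : (j : ℕ) ≠ 1 := by omega
        simp only [th, th', hi0, hi1, hj0, hj1, if_true, if_false]
        norm_num
      · have hj1 : (j : ℕ) ≠ 1 := by omega
        simp only [th, th', hi0, hi1, hj0, hj1, if_false]
end
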